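/- Let $G$ be an abelian group, $S \subseteq G$ a finite nonempty subset, $g \in G$, and $p^e \geq 2$ an integer. For $\mu \in \mathbb{Z}_{>0}$ write $M^{(\mu)}$ for the set of sums $\sum_{s \in S} n_s \cdot s$ with $n_s \geq 0$ integers and $\sum_s n_s = \mu$. Suppose that for every $s \in S$ there exists an integer $c_s > 0$ such that $p^e \cdot s + c_s \cdot g \in M^{(p^e)}$. Then, setting $\mu := (p^e - 1)|S| + 1$, for every $x \in M^{(\mu)}$ there exist infinitely many integers $c > 0$ with $x + c \cdot g \in M^{(\mu)}$; since $M^{(\mu)}$ is finite, it follows that $g$ is a torsion element of $G$. -/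
import Mathlib


/-- `Msum S μ` is the set of sums `∑_{s ∈ S} n_s • s` with `n_s ≥ 0` integers and
`∑_{s ∈ S} n_s = μ`. -/
def Msum {G : Type*} [AddCommGroup G] (S : Finset G) (μ : ℕ) : Set G :=
  {x | ∃ n : G → ℕ, (∑ s ∈ S, n s) = μ ∧ x = ∑ s ∈ S, n s • s}

/-- `Msum S μ` is a finite set. -/
lemma Msum_finite {G : Type*} [AddCommGroup G] (S : Finset G) (μ : ℕ) :
    (Msum S μ).Finite := by
  apply Set.Finite.subset (Set.finite_range
    (fun f : S → Fin (μ + 1) => ∑ s ∈ S.attach, (f s : ℕ) • (s : G)))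
  rintro x ⟨n, hn, rfl⟩
  refine ⟨fun s => ⟨n s, ?_⟩, ?_⟩
  · have : n s ≤ μ := hn ▸ Finset.single_le_sum (fun i _ => Nat.zero_le _) s.2
    omega
  · rw [← Finset.sum_attach S (fun t => n t • t)]

/-- Pigeonhole step: any element of `M^{(μ)}` with `μ = (q-1)|S|+1` can be moved
by a positive multiple of `g` and stay in `M^{(μ)}`. -/
lemma Msum_step {G : Type*} [AddCommGroup G] (S : Finset G) (hS : S.Nonempty)
    (g : G) (q : ℕ) (hq : 2 ≤ q)
    (hc : ∀ s ∈ S, ∃ c : ℕ, 0 < c ∧ q • s + c • g ∈ Msum S q) :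
    ∀ x ∈ Msum S ((q - 1) * S.card + 1),
      ∃ c : ℕ, 0 < c ∧ x + c • g ∈ Msum S ((q - 1) * S.card + 1) := by
  classical
  rintro x ⟨n, hn, rfl⟩
  -- pigeonhole: some coefficient is ≥ q
  have hbig : ∃ s ∈ S, q ≤ n s := by
    by_contra h
    push_neg at h
    have : ∑ s ∈ S, n s ≤ ∑ s ∈ S, (q - 1) :=
      Finset.sum_le_sum (fun s hs => by have := h s hs; omega)
    simp only [Finset.sum_const, smul_eq_mul] at this
    rw [hn] at this
    nlinarith [Finset.card_pos.2 hS]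
  obtain ⟨s, hsS, hqns⟩ := hbig
  obtain ⟨c, hcpos, m, hm, hmeq⟩ := hc s hsS
  refine ⟨c, hcpos, fun t => (if t = s then n t - q else n t) + m t, ?_, ?_⟩
  · rw [Finset.sum_add_distrib, hm]
    have h1 : ∑ t ∈ S, (if t = s then n t - q else n t)
        = (n s - q) + ∑ t ∈ S.erase s, n t := by
      rw [← Finset.add_sum_erase _ _ hsS, if_pos rfl]
      congr 1
      exact Finset.sum_congr rfl fun t ht => by
        rw [if_neg (Finset.ne_of_mem_erase ht)]
    have h2 : n s + ∑ t ∈ S.erase s, n t = (q - 1) * S.card + 1 := by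
      rw [Finset.add_sum_erase _ _ hsS, hn]
    omega
  · simp only [add_smul, Finset.sum_add_distrib]
    rw [← hmeq]
    have h1 : ∑ t ∈ S, (if t = s then n t - q else n t) • t
        = (n s - q) • s + ∑ t ∈ S.erase s, n t • t := by
      rw [← Finset.add_sum_erase _ _ hsS, if_pos rfl]
      congr 1
      exact Finset.sum_congr rfl fun t ht => by
        rw [if_neg (Finset.ne_of_mem_erase ht)]
    have h2 : ∑ t ∈ S, n t • t = n s • s + ∑ t ∈ S.erase s, n t • t :=
      (Finset.add_sum_erase _ _ hsS).symm
    rw [h1, h2, sub_nsmul s hqns]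
    abel

/-- combinatorial core of Step 5 of the main theorem.  Let `G`
be an abelian group, `S ⊆ G` finite nonempty, `g ∈ G`, and `p^e ≥ 2`.  If for
every `s ∈ S` there is `c_s > 0` with `p^e • s + c_s • g ∈ M^{(p^e)}`, then for
`μ = (p^e - 1)|S| + 1` and every `x ∈ M^{(μ)}` there are infinitely many `c > 0`
with `x + c • g ∈ M^{(μ)}`; since `M^{(μ)}` is finite, `g` is torsion. -/
theorem stmt_8 {G : Type*} [AddCommGroup G] (S : Finset G) (hS : S.Nonempty)
    (g : G) (p e : ℕ) (hpe : 2 ≤ p ^ e)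
    (hc : ∀ s ∈ S, ∃ c : ℕ, 0 < c ∧ p ^ e • s + c • g ∈ Msum S (p ^ e)) :
    (∀ x ∈ Msum S ((p ^ e - 1) * S.card + 1),
      {c : ℕ | 0 < c ∧ x + c • g ∈ Msum S ((p ^ e - 1) * S.card + 1)}.Infinite) ∧
    ∃ n : ℕ, 0 < n ∧ n • g = 0 := by
  classical
  set μ := (p ^ e - 1) * S.card + 1 with hμ
  have step := Msum_step S hS g (p ^ e) hpe hc
  have hinf : ∀ x ∈ Msum S μ,
      {c : ℕ | 0 < c ∧ x + c • g ∈ Msum S μ}.Infinite := by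
    intro x hx
    apply Set.infinite_of_forall_exists_gt
    have hnext : ∀ c ∈ {c : ℕ | 0 < c ∧ x + c • g ∈ Msum S μ},
        ∃ c' ∈ {c : ℕ | 0 < c ∧ x + c • g ∈ Msum S μ}, c < c' := by
      rintro c ⟨hc0, hcm⟩
      obtain ⟨c', hc'0, hc'm⟩ := step _ hcm
      refine ⟨c + c', ⟨by omega, ?_⟩, by omega⟩
      rwa [add_smul, ← add_assoc]
    intro a
    induction a with
    | zero =>
      obtain ⟨c, hc0, hcm⟩ := step x hx
      exact ⟨c, ⟨hc0, hcm⟩, hc0⟩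
    | succ a ih =>
      obtain ⟨b, hb, hab⟩ := ih
      obtain ⟨b', hb', hbb'⟩ := hnext b hb
      exact ⟨b', hb', by omega⟩
  refine ⟨hinf, ?_⟩
  -- pick an element of M^{(μ)}
  obtain ⟨s₀, hs₀⟩ := hS
  have hx : (μ : ℕ) • s₀ ∈ Msum S μ := by
    refine ⟨fun t => if t = s₀ then μ else 0, ?_, ?_⟩
    · rw [Finset.sum_ite_eq' S s₀ (fun _ => μ), if_pos hs₀]
    · have h2 : ∑ t ∈ S, (if t = s₀ then μ else 0) • t
          = ∑ t ∈ S, (if t = s₀ then μ • s₀ else 0) :=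
        Finset.sum_congr rfl fun t ht => by split <;> simp_all
      rw [h2, Finset.sum_ite_eq' S s₀ (fun _ => μ • s₀), if_pos hs₀]
  obtain ⟨c, hcT, c', hc'T, hne, heq⟩ :=
    (hinf _ hx).exists_ne_map_eq_of_mapsTo
      (f := fun c => (μ : ℕ) • s₀ + c • g) (fun c hc => hc.2) (Msum_finite S μ)
  have hgg : c • g = c' • g := by
    have := heq
    simpa using add_left_cancel this
  rcases Nat.lt_or_ge c c' with h | h
  · exact ⟨c' - c, by omega, by simp [sub_nsmul g h.le, hgg]⟩
  · have h' : c' < c := by omega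
    exact ⟨c - c', by omega, by simp [sub_nsmul g h'.le, hgg]⟩
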